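/- arXiv:1105.2031 — 4 statements merged into one kernel-verified Lean document; each statement's English description precedes it below -/
import Mathlib

section
/- For real x with x > 2 and real y ∈ [−2, 2], log|x − y| = log((x + √(x² − 4))/2) − ∑_{n≥1} (2/n)·((x − √(x² − 4))/2)ⁿ·T_n(y/2), and the series converges absolutely. -/
open Polynomial Polynomial.Chebyshev

/-!
Put `q = (x - √(x² - 4))/2`, so that `1/q = (x + √(x² - 4))/2` and `q + 1/q = x`, and write
`y = 2 cos θ`. Then `x - y = q⁻¹ |1 - q e^{iθ}|²`, so the series is twice the real part of
`-log (1 - z) = ∑ zⁿ/n` at `z = q e^{iθ}`, read through `T_n(cos θ) = cos nθ`. Absolute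
convergence comes for free: a summable real series is absolutely summable.
-/

theorem Complex.normSq_one_sub_ofReal_mul_exp (q θ : ℝ) :
    normSq (1 - q * exp (θ * I)) = 1 - 2 * q * Real.cos θ + q ^ 2 := by
  rw [normSq_apply]
  simp only [sub_re, sub_im, one_re, one_im, re_ofReal_mul, im_ofReal_mul,
    exp_ofReal_mul_I_re, exp_ofReal_mul_I_im]
  linear_combination q ^ 2 * Real.sin_sq_add_cos_sq θ

theorem Real.hasSum_two_div_mul_pow_mul_cos {q : ℝ} (hq : |q| < 1) (θ : ℝ) :
    HasSum (fun n : ℕ => 2 / ((n : ℝ) + 1) * q ^ (n + 1) * cos (((n : ℝ) + 1) * θ))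
      (-log (1 - 2 * q * cos θ + q ^ 2)) := by
  set z : ℂ := q * Complex.exp (θ * Complex.I)
  have hz : ‖z‖ < 1 := by simpa [z, Complex.norm_exp_ofReal_mul_I] using hq
  have h := Complex.reCLM.hasSum ((Complex.hasSum_taylorSeries_neg_log' hz).mul_left 2)
  convert h using 1
  · funext n
    have hterm : 2 * (z ^ (n + 1) / (n + 1)) = ((2 / ((n : ℝ) + 1) * q ^ (n + 1) : ℝ) : ℂ) *
        Complex.exp (((n + 1 : ℝ) * θ : ℝ) * Complex.I) := by
      rw [mul_pow, ← Complex.exp_nat_mul]; push_cast; ring_nf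
    rw [Complex.reCLM_apply, hterm, Complex.re_ofReal_mul, Complex.exp_ofReal_mul_I_re]
  · rw [← Complex.normSq_one_sub_ofReal_mul_exp, Complex.normSq_eq_norm_sq, Real.log_pow]
    simp [z, Complex.log_re]

theorem Real.hasSum_two_div_mul_pow_mul_eval_T {q t : ℝ} (hq : |q| < 1) (ht : |t| ≤ 1) :
    HasSum (fun n : ℕ => 2 / ((n : ℝ) + 1) * q ^ (n + 1) * (T ℝ ((n : ℤ) + 1)).eval t)
      (-log (1 - 2 * q * t + q ^ 2)) := by
  obtain ⟨ht₁, ht₂⟩ := abs_le.mp ht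
  rw [← cos_arccos ht₁ ht₂]
  simpa only [T_real_cos, Int.cast_add, Int.cast_natCast, Int.cast_one]
    using hasSum_two_div_mul_pow_mul_cos hq (arccos t)

theorem Real.log_sub_of_mul_eq_one_of_add_eq {r q x y : ℝ} (hr : 0 < r) (hrq : r * q = 1)
    (hx : r + q = x) (hy : y < x) : log (x - y) = log r + log (1 - 2 * q * (y / 2) + q ^ 2) := by
  have hxy : x - y = r * (1 - 2 * q * (y / 2) + q ^ 2) := by
    linear_combination -hx + (y - q) * hrq
  have hne : 1 - 2 * q * (y / 2) + q ^ 2 ≠ 0 := by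
    rintro h; rw [h, mul_zero] at hxy; linarith
  rw [hxy, log_mul hr.ne' hne]

/-- For `x > 2` and `y ∈ [-2,2]`,
`log |x - y| = log((x + √(x²-4))/2) - ∑_{n ≥ 1} (2/n) ((x - √(x²-4))/2)ⁿ T_n(y/2)`,
and the series converges absolutely. -/
theorem haagerup_log_expansion_outside (x y : ℝ) (hx : 2 < x)
    (hy : y ∈ Set.Icc (-2 : ℝ) 2) :
    Summable
      (fun n : ℕ =>
        |(2 / ((n : ℝ) + 1)) * ((x - Real.sqrt (x ^ 2 - 4)) / 2) ^ (n + 1) *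
          (T ℝ ((n : ℤ) + 1)).eval (y / 2)|) ∧
    HasSum
      (fun n : ℕ =>
        (2 / ((n : ℝ) + 1)) * ((x - Real.sqrt (x ^ 2 - 4)) / 2) ^ (n + 1) *
          (T ℝ ((n : ℤ) + 1)).eval (y / 2))
      (Real.log ((x + Real.sqrt (x ^ 2 - 4)) / 2) - Real.log |x - y|) := by
  obtain ⟨hy₁, hy₂⟩ := hy
  set s := Real.sqrt (x ^ 2 - 4)
  have hs : s ^ 2 = x ^ 2 - 4 := Real.sq_sqrt (by nlinarith)
  have hs₀ : 0 ≤ s := Real.sqrt_nonneg _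
  have hsx : s < x := by nlinarith
  have hq : |(x - s) / 2| < 1 := abs_lt.mpr ⟨by linarith, by nlinarith⟩
  have ht : |y / 2| ≤ 1 := abs_le.mpr ⟨by linarith, by linarith⟩
  have hlog := Real.log_sub_of_mul_eq_one_of_add_eq (r := (x + s) / 2) (q := (x - s) / 2) (y := y)
    (by linarith) (by linear_combination -hs / 4) (by ring) (by linarith)
  have h := Real.hasSum_two_div_mul_pow_mul_eval_T hq ht
  rw [abs_of_pos (by linarith : 0 < x - y), hlog, sub_add_cancel_left]
  exact ⟨summable_abs_iff.mpr h.summable, h⟩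
end

section
/- Let β be the arcsine law on [−2, 2], i.e. β(dy) = 1_{[−2,2]}(y) dy/(π·√(4−y²)). Then for every real x, ∫ log|x − y| β(dy) = 0 if |x| ≤ 2, and ∫ log|x − y| β(dy) = log((|x| + √(x² − 4))/2) if |x| > 2. -/
/-!
Substituting `y = 2 cos θ` turns `β` into the law of `2 Re z` for `z` uniform on the unit circle.
There `x - 2 Re z = -z⁻¹ (z² - x z + 1)`, so the potential at `x` is the logarithmic Mahler measure
of `z² - x z + 1 = (z - w) (z - w⁻¹)`, where `w + w⁻¹ = x`; by Jensen's formula this is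
`log⁺ |w| + log⁺ |w⁻¹| = |log |w||`. For `|x| ≤ 2` the root `w` lies on the unit circle, and for
`|x| > 2` it is real with `|w| = (|x| + √(x² - 4)) / 2`.
-/

open MeasureTheory Real

/-- The arcsine law on `[-2,2]`: density `1/(π √(4-y²))` w.r.t. Lebesgue measure. -/
noncomputable def arcsineLaw : Measure ℝ :=
  (volume.restrict (Set.Icc (-2 : ℝ) 2)).withDensity
    fun y => ENNReal.ofReal (1 / (π * Real.sqrt (4 - y ^ 2)))

open Set intervalIntegral Polynomial ComplexConjugate

section ChangeOfVariables

variable {E : Type*} [NormedAddCommGroup E] [NormedSpace ℝ E]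

theorem integral_arcsineLaw_eq_setIntegral (f : ℝ → E) :
    ∫ y, f y ∂arcsineLaw = ∫ y in Ioo (-2) 2, (1 / (π * √(4 - y ^ 2))) • f y := by
  have hmeas : Measurable fun y : ℝ ↦ ENNReal.ofReal (1 / (π * √(4 - y ^ 2))) := by fun_prop
  rw [arcsineLaw, integral_withDensity_eq_integral_toReal_smul hmeas
    (ae_of_all _ fun _ ↦ ENNReal.ofReal_lt_top), integral_Icc_eq_integral_Ioo]
  simp_rw [ENNReal.toReal_ofReal (by positivity : (0 : ℝ) ≤ 1 / (π * √(4 - _ ^ 2)))]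

theorem image_two_mul_cos_Ioo : (fun θ ↦ 2 * cos θ) '' Ioo 0 π = Ioo (-2) 2 := by
  have hcos : cos '' Ioo 0 π = Ioo (-1) 1 := cosPartialHomeomorph.image_source_eq_target
  rw [← image_image (2 * ·) cos, hcos, image_mul_left_Ioo (two_pos : (0 : ℝ) < 2)]
  norm_num

theorem sqrt_four_sub_two_mul_cos_sq {θ : ℝ} (hθ : θ ∈ Ioo 0 π) :
    √(4 - (2 * cos θ) ^ 2) = 2 * sin θ := by
  rw [← sqrt_sq (mul_pos two_pos (sin_pos_of_pos_of_lt_pi hθ.1 hθ.2)).le]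
  congr 1
  linear_combination -4 * sin_sq_add_cos_sq θ

theorem integral_arcsineLaw (f : ℝ → E) :
    ∫ y, f y ∂arcsineLaw = π⁻¹ • ∫ θ in 0..π, f (2 * cos θ) := by
  have hderiv (θ : ℝ) (_ : θ ∈ Ioo 0 π) :
      HasDerivWithinAt (fun θ ↦ 2 * cos θ) (2 * -sin θ) (Ioo 0 π) θ :=
    ((hasDerivAt_cos θ).const_mul 2).hasDerivWithinAt
  have hinj : InjOn (fun θ ↦ 2 * cos θ) (Ioo 0 π) :=
    (mul_right_injective₀ two_ne_zero).comp_injOn (injOn_cos.mono Ioo_subset_Icc_self)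
  rw [integral_arcsineLaw_eq_setIntegral, ← image_two_mul_cos_Ioo,
    integral_image_eq_integral_abs_deriv_smul measurableSet_Ioo hderiv hinj,
    integral_of_le pi_pos.le, integral_Ioc_eq_integral_Ioo, ← MeasureTheory.integral_smul]
  refine setIntegral_congr_fun measurableSet_Ioo fun θ hθ ↦ ?_
  have hsin : 0 < sin θ := sin_pos_of_pos_of_lt_pi hθ.1 hθ.2
  rw [sqrt_four_sub_two_mul_cos_sq hθ, smul_smul, abs_mul, abs_neg, abs_two, abs_of_pos hsin]
  congr 1
  field_simp

theorem Real.circleAverage_comp_re (f : ℝ → E) :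
    circleAverage (fun z ↦ f z.re) 0 1 = π⁻¹ • ∫ θ in 0..π, f (cos θ) := by
  have hre (θ : ℝ) : (circleMap 0 1 θ).re = cos θ := by simp [circleMap]
  simp only [circleAverage_def, hre]
  have hsymm (θ : ℝ) : f (cos (2 * π - θ)) = f (cos θ) := by rw [cos_two_pi_sub]
  have hπ : 2 * π - π = π := by ring
  by_cases hf : IntervalIntegrable (fun θ ↦ f (cos θ)) volume 0 π
  · have hf' : IntervalIntegrable (fun θ ↦ f (cos θ)) volume π (2 * π) := by
      simpa only [hsymm, hπ, sub_zero] using (hf.comp_sub_left (2 * π)).symm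
    have hright : ∫ θ in π..2 * π, f (cos θ) = ∫ θ in 0..π, f (cos θ) := by
      have h := integral_comp_sub_left (fun θ ↦ f (cos θ)) (2 * π) (a := 0) (b := π)
      simpa only [hsymm, hπ, sub_zero] using h.symm
    rw [← integral_add_adjacent_intervals hf hf', hright, ← two_smul ℝ, smul_smul]
    congr 1
    field_simp
  · have hf' : ¬IntervalIntegrable (fun θ ↦ f (cos θ)) volume 0 (2 * π) :=
      fun h ↦ hf <| h.mono_set <|
        uIcc_subset_uIcc_left (mem_uIcc_of_le pi_pos.le (by linarith [pi_pos]))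
    rw [integral_undef hf, integral_undef hf', smul_zero, smul_zero]

end ChangeOfVariables

theorem Real.posLog_add_posLog_inv (x : ℝ) : log⁺ x + log⁺ x⁻¹ = |log x| := by
  rw [posLog_apply, posLog_apply, log_inv, max_comm, max_comm 0,
    max_zero_add_max_neg_zero_eq_abs_self]

theorem Polynomial.logMahlerMeasure_X_sq_sub_C_add_inv_mul_X_add_one {w : ℂ} (hw : w ≠ 0) :
    (X ^ 2 - C (w + w⁻¹) * X + 1).logMahlerMeasure = |log ‖w‖| := by
  have hfactor : (X ^ 2 - C (w + w⁻¹) * X + 1 : ℂ[X]) = (X - C w) * (X - C w⁻¹) := by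
    have : C w * C w⁻¹ = (1 : ℂ[X]) := by rw [← C_mul, mul_inv_cancel₀ hw, C_1]
    rw [C_add]
    linear_combination -this
  rw [hfactor, logMahlerMeasure_mul_eq_add_logMahlerMeasure
      (mul_ne_zero (X_sub_C_ne_zero w) (X_sub_C_ne_zero w⁻¹)),
    logMahlerMeasure_X_sub_C, logMahlerMeasure_X_sub_C, norm_inv, posLog_add_posLog_inv]

theorem Complex.norm_sq_sub_ofReal_mul_add_one {z : ℂ} (hz : ‖z‖ = 1) (x : ℝ) :
    ‖z ^ 2 - x * z + 1‖ = |x - 2 * z.re| := by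
  have hz0 : z ≠ 0 := norm_pos_iff.mp (by simp [hz])
  have hfactor : z ^ 2 - x * z + 1 = -z * ((x - 2 * z.re : ℝ) : ℂ) := by
    rw [ofReal_sub, ← add_conj, ← inv_eq_conj hz]
    field_simp
    ring
  rw [hfactor, norm_mul, norm_neg, hz, one_mul, norm_real, Real.norm_eq_abs]

theorem circleAverage_log_abs_sub_two_mul_re (x : ℝ) :
    circleAverage (fun z ↦ log |x - 2 * z.re|) 0 1 =
      (X ^ 2 - C (x : ℂ) * X + 1).logMahlerMeasure := by
  rw [logMahlerMeasure_def]
  refine circleAverage_congr_sphere fun z hz ↦ ?_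
  rw [abs_one, mem_sphere_zero_iff_norm] at hz
  simp [Complex.norm_sq_sub_ofReal_mul_add_one hz]

theorem exists_norm_eq_one_add_inv_eq {x : ℝ} (hx : |x| ≤ 2) :
    ∃ w : ℂ, ‖w‖ = 1 ∧ w + w⁻¹ = x := by
  have hsq : x ^ 2 ≤ 4 := by nlinarith [abs_le.mp hx, sq_abs x]
  let w : ℂ := ⟨x / 2, √(4 - x ^ 2) / 2⟩
  have hw : ‖w‖ = 1 := by
    rw [Complex.norm_def, Complex.normSq_mk, sqrt_eq_one]
    linear_combination sq_sqrt (sub_nonneg.mpr hsq) / 4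
  refine ⟨w, hw, ?_⟩
  rw [Complex.inv_eq_conj hw, Complex.add_conj]
  simp only [w]
  push_cast
  ring

theorem exists_norm_eq_add_inv_eq {x : ℝ} (hx : 2 < |x|) :
    ∃ w : ℂ, ‖w‖ = (|x| + √(x ^ 2 - 4)) / 2 ∧ w + w⁻¹ = x := by
  set a := (|x| + √(x ^ 2 - 4)) / 2
  have hsqrt : √(x ^ 2 - 4) ^ 2 = x ^ 2 - 4 := sq_sqrt (by nlinarith [sq_abs x])
  have ha : 0 < a := by positivity
  have hainv : a⁻¹ = (|x| - √(x ^ 2 - 4)) / 2 :=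
    inv_eq_of_mul_eq_one_right (by linear_combination (sq_abs x - hsqrt) / 4)
  have hsum : a + a⁻¹ = |x| := by rw [hainv]; ring
  rcases le_total 0 x with hx0 | hx0
  · refine ⟨a, by simp [ha.le], ?_⟩
    rw [← Complex.ofReal_inv, ← Complex.ofReal_add, hsum, abs_of_nonneg hx0]
  · refine ⟨-a, by simp [ha.le], ?_⟩
    rw [inv_neg, ← neg_add, ← Complex.ofReal_inv, ← Complex.ofReal_add, hsum, abs_of_nonpos hx0]
    push_cast
    ring

/-- The logarithmic potential of the arcsine law: `∫ log |x-y| β(dy)` vanishes on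
`[-2,2]` and equals `log((|x| + √(x²-4))/2)` outside. -/
theorem arcsine_log_potential (x : ℝ) :
    ∫ y, Real.log |x - y| ∂arcsineLaw =
      if |x| ≤ 2 then 0 else Real.log ((|x| + Real.sqrt (x ^ 2 - 4)) / 2) := by
  rw [integral_arcsineLaw, ← circleAverage_comp_re (fun t ↦ log |x - 2 * t|),
    circleAverage_log_abs_sub_two_mul_re]
  split_ifs with hx
  · obtain ⟨w, hw, hwx⟩ := exists_norm_eq_one_add_inv_eq hx
    rw [← hwx, logMahlerMeasure_X_sq_sub_C_add_inv_mul_X_add_one (norm_pos_iff.mp (by simp [hw])),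
      hw, log_one, abs_zero]
  · obtain ⟨w, hw, hwx⟩ := exists_norm_eq_add_inv_eq (not_le.mp hx)
    have hw1 : 1 ≤ ‖w‖ := by linarith [sqrt_nonneg (x ^ 2 - 4)]
    rw [← hwx, logMahlerMeasure_X_sq_sub_C_add_inv_mul_X_add_one (norm_pos_iff.mp (by linarith)),
      abs_of_nonneg (log_nonneg hw1), hw]
end

section
/- For every integer n ≥ 1 and all real x, y with x ≠ y, the difference quotient of the rescaled Chebyshev polynomial of the second kind satisfies (ψ_n(x) − ψ_n(y))/(x − y) = ∑_{k=0}^{n−1} ψ_k(x)·ψ_{n−k−1}(y), where ψ_k(x) = U_k(x/2). -/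
open Polynomial Polynomial.Chebyshev

private noncomputable def psi (x : ℝ) (m : ℤ) : ℝ := (U ℝ m).eval (x / 2)

private lemma psi_add_two (x : ℝ) (m : ℤ) :
    psi x (m + 2) = x * psi x (m + 1) - psi x m := by
  simp only [psi, U_add_two, eval_sub, eval_mul, eval_ofNat, eval_X]
  ring

private lemma psi_add_one (x : ℝ) (m : ℤ) :
    psi x (m + 1) = x * psi x m - psi x (m - 1) := by
  simp only [psi, U_add_one, eval_sub, eval_mul, eval_ofNat, eval_X]
  ring

private lemma psi_zero (x : ℝ) : psi x 0 = 1 := by simp [psi]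
private lemma psi_one (x : ℝ) : psi x 1 = x := by simp [psi]; ring
private lemma psi_neg_one (x : ℝ) : psi x (-1) = 0 := by simp [psi]

private lemma sum_step (x y : ℝ) (n : ℕ) :
    ∑ k ∈ Finset.range (n + 2), psi x k * psi y ((n : ℤ) + 2 - k - 1) =
      psi y ((n : ℤ) + 1) + x * ∑ k ∈ Finset.range (n + 1), psi x k * psi y ((n : ℤ) + 1 - k - 1)
        - ∑ k ∈ Finset.range n, psi x k * psi y ((n : ℤ) - k - 1) := by
  rw [Finset.sum_range_succ' (fun k => psi x k * psi y ((n : ℤ) + 2 - k - 1))]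
  have h1 : ∀ k ∈ Finset.range (n + 1),
      psi x (k + 1) * psi y ((n : ℤ) + 2 - (k + 1) - 1) =
        x * (psi x k * psi y ((n : ℤ) + 1 - k - 1))
          - psi x ((k : ℤ) - 1) * psi y ((n : ℤ) + 1 - k - 1) := by
    intro k _
    have := psi_add_one x k
    push_cast
    push_cast at this
    rw [show ((n : ℤ) + 2 - ((k : ℤ) + 1) - 1) = (n : ℤ) + 1 - k - 1 by ring, this]
    ring
  push_cast
  rw [Finset.sum_congr rfl h1, Finset.sum_sub_distrib, ← Finset.mul_sum]
  have h2 : ∑ k ∈ Finset.range (n + 1), psi x ((k : ℤ) - 1) * psi y ((n : ℤ) + 1 - k - 1) =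
      ∑ k ∈ Finset.range n, psi x k * psi y ((n : ℤ) - k - 1) := by
    rw [Finset.sum_range_succ' (fun k => psi x ((k : ℤ) - 1) * psi y ((n : ℤ) + 1 - k - 1))]
    simp only [Nat.cast_zero, zero_sub, psi_neg_one, zero_mul, add_zero]
    apply Finset.sum_congr rfl
    intro k _
    push_cast
    ring_nf
  rw [h2, show ((n : ℤ) + 2 - 0 - 1) = (n : ℤ) + 1 by ring, psi_zero, one_mul]
  ring

private lemma key (x y : ℝ) (n : ℕ) :
    psi x n - psi y n = (x - y) * ∑ k ∈ Finset.range n, psi x k * psi y ((n : ℤ) - k - 1) := by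
  induction n using Nat.twoStepInduction with
  | zero => simp [psi_zero]
  | one => simp [psi_one, psi_zero]
  | more n ih1 ih2 =>
    have hx := psi_add_two x n
    have hy := psi_add_two y n
    have hs := sum_step x y n
    push_cast at hs ⊢
    rw [hx, hy, hs]
    push_cast at ih1 ih2
    linear_combination x * ih2 - ih1

/-- The difference quotient of `ψ_n(x) = U_n(x/2)` factors as
`(ψ_n(x) - ψ_n(y))/(x - y) = ∑_{k=0}^{n-1} ψ_k(x) ψ_{n-k-1}(y)` for `x ≠ y`. -/
theorem chebyshev_U_difference_quotient (n : ℕ) (hn : 1 ≤ n) (x y : ℝ) (hxy : x ≠ y) :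
    ((U ℝ n).eval (x / 2) - (U ℝ n).eval (y / 2)) / (x - y) =
      ∑ k ∈ Finset.range n, (U ℝ k).eval (x / 2) * (U ℝ (n - k - 1 : ℕ)).eval (y / 2) := by
  have h := key x y n
  have hsum : ∑ k ∈ Finset.range n, (U ℝ k).eval (x / 2) * (U ℝ (n - k - 1 : ℕ)).eval (y / 2)
      = ∑ k ∈ Finset.range n, psi x k * psi y ((n : ℤ) - k - 1) := by
    apply Finset.sum_congr rfl
    intro k hk
    have hk' : k + 1 ≤ n := Finset.mem_range.mp hk
    simp only [psi]
    rw [show ((n - k - 1 : ℕ) : ℤ) = (n : ℤ) - k - 1 by omega]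
  rw [hsum, show ((U ℝ n).eval (x / 2) - (U ℝ n).eval (y / 2)) = psi x n - psi y n from rfl, h,
    mul_div_cancel_left₀ _ (sub_ne_zero.mpr hxy)]
end

section
/- Let β, α be the arcsine and semicircle laws on [−2,2], and (𝒰f)(x) = ∫ (f(x)−f(y))/(x−y) β(dy). Then for every C² function f on [−2,2] and x ∈ (−2,2), (𝒩f)(x) = −√(4−x²)·d/dx[√(4−x²)·(𝒰f)(x)], where (𝒩f)(x) = ∫ yf'(y)β(dy) + x∫ f'(y)β(dy) − (4−x²)∫ (f'(x)−f'(y))/(x−y) β(dy). -/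
open MeasureTheory Real

/-- The operator `𝒰f(x) = ∫ (f(x) - f(y))/(x - y) β(dy)`. -/
noncomputable def calU (f : ℝ → ℝ) (x : ℝ) : ℝ :=
  ∫ y, (f x - f y) / (x - y) ∂arcsineLaw

/-- The counting-number operator
`𝒩f(x) = ∫ y f'(y) β(dy) + x ∫ f'(y) β(dy) - (4-x²) ∫ (f'(x)-f'(y))/(x-y) β(dy)`. -/
noncomputable def calN (f : ℝ → ℝ) (x : ℝ) : ℝ :=
  (∫ y, y * deriv f y ∂arcsineLaw) + x * (∫ y, deriv f y ∂arcsineLaw) -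
    (4 - x ^ 2) * ∫ y, (deriv f x - deriv f y) / (x - y) ∂arcsineLaw

open Set Filter Topology

/-!
Put `F x y = dslope f x y`, the difference quotient extended by `f'` on the diagonal. For `f ∈ C²`,
`F` is differentiable in each variable with derivative bounded by `sup |f''|` (on the diagonal,
Taylor's formula gives `f'' / 2`), so `𝒰f t = ∫ F y t β(dy)` can be differentiated under the
integral sign. Differentiating `(y - x) F x y = f y - f x` gives `(y - x) ∂_y F x y = f' y - F x y`
and `∂_x F x y + ∂_y F x y = (f' x - f' y) / (x - y)`. What is left, `∫ ∂_y F x y β(dy)`, is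
removed by the integration by parts identity `∫ ((4 - y²) g' y - y g y) β(dy) = 0` of the arcsine
law: the integrand times the density is the derivative of `√(4 - y²) g y / π`, which vanishes
at `±2`.
-/

theorem dslope_comm (f : ℝ → ℝ) (a b : ℝ) : dslope f a b = dslope f b a := by
  rcases eq_or_ne b a with rfl | h
  · rfl
  · rw [dslope_of_ne f h, dslope_of_ne f h.symm, slope_comm]

theorem hasDerivAt_dslope_same {f : ℝ → ℝ} {a c : ℝ} (hf : Differentiable ℝ f)
    (hf' : HasDerivAt (deriv f) c a) : HasDerivAt (dslope f a) (c / 2) a := by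
  set R : ℝ → ℝ := fun y => f y - deriv f a * (y - a) - c / 2 * (y - a) ^ 2
  have hR : (fun y => R y - R a) =o[𝓝 a] fun y => (y - a) ^ 2 := by
    have hR' : ∀ y ∈ univ, HasDerivWithinAt R (deriv f y - deriv f a - (y - a) * c) univ y := by
      intro y _
      exact ((((hf y).hasDerivAt.sub (((hasDerivAt_id y).sub_const a).const_mul (deriv f a))).sub
        ((((hasDerivAt_id y).sub_const a).pow 2).const_mul (c / 2))).congr_deriv
          (by simp; ring)).hasDerivWithinAt
    simpa using convex_univ.isLittleO_pow_succ_real (n := 1) (mem_univ a) hR'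
      (by simpa using (hasDerivAt_iff_isLittleO.mp hf'))
  rw [hasDerivAt_iff_tendsto_slope]
  have hslope : ∀ y ∈ ({a}ᶜ : Set ℝ),
      c / 2 + (R y - R a) / (y - a) ^ 2 = slope (dslope f a) a y := by
    intro y hya
    have hya' : y - a ≠ 0 := sub_ne_zero.2 hya
    rw [slope_def_field, dslope_same, dslope_of_ne f hya, slope_def_field]
    field_simp
    ring
  refine (tendsto_congr' (eventually_nhdsWithin_of_forall hslope)).mp ?_
  simpa using tendsto_const_nhds.add (hR.tendsto_div_nhds_zero.mono_left nhdsWithin_le_nhds)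

theorem sub_mul_deriv_dslope {f : ℝ → ℝ} {a b : ℝ} (hf : DifferentiableAt ℝ f b)
    (h : DifferentiableAt ℝ (dslope f a) b) :
    (b - a) * deriv (dslope f a) b = deriv f b - dslope f a b := by
  have hprod : HasDerivAt (fun y => (y - a) * dslope f a y)
      (1 * dslope f a b + (b - a) * deriv (dslope f a) b) b :=
    ((hasDerivAt_id b).sub_const a).mul h.hasDerivAt
  have hprod_eq : (fun y => (y - a) * dslope f a y) = fun y => f y - f a :=
    funext fun y => sub_smul_dslope f a y
  rw [hprod_eq] at hprod
  linarith [hprod.unique (hf.hasDerivAt.sub_const (f a))]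

theorem abs_sub_sub_deriv_mul_le {f : ℝ → ℝ} {s : Set ℝ} {C : ℝ} (hs : Convex ℝ s)
    (hf : ∀ z ∈ s, DifferentiableAt ℝ f z) (hf' : ∀ z ∈ s, DifferentiableAt ℝ (deriv f) z)
    (hC : ∀ z ∈ s, |deriv (deriv f) z| ≤ C) {a b : ℝ} (ha : a ∈ s) (hb : b ∈ s) :
    |f b - f a - deriv f b * (b - a)| ≤ C * (b - a) ^ 2 := by
  have hseg : uIcc a b ⊆ s := (segment_eq_uIcc a b).symm ▸ hs.segment_subset ha hb
  have hlip : ∀ z ∈ uIcc a b, ‖deriv f z - deriv f b‖ ≤ C * |b - a| := by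
    intro z hz
    calc ‖deriv f z - deriv f b‖ ≤ C * ‖z - b‖ :=
          hs.norm_image_sub_le_of_norm_deriv_le hf' hC hb (hseg hz)
      _ ≤ C * |b - a| := by
          rw [Real.norm_eq_abs, abs_sub_comm]
          exact mul_le_mul_of_nonneg_left (abs_sub_right_of_mem_uIcc hz)
            ((abs_nonneg _).trans (hC a ha))
  have hg : ∀ z ∈ uIcc a b, HasDerivWithinAt (fun z => f z - deriv f b * z)
      (deriv f z - deriv f b) (uIcc a b) z := fun z hz =>
    ((hf z (hseg hz)).hasDerivAt.sub ((hasDerivAt_id z).const_mul _)).hasDerivWithinAt.congr_deriv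
      (by simp)
  calc |f b - f a - deriv f b * (b - a)| = ‖(f b - deriv f b * b) - (f a - deriv f b * a)‖ := by
        rw [Real.norm_eq_abs]; ring_nf
    _ ≤ C * |b - a| * ‖b - a‖ := (convex_uIcc a b).norm_image_sub_le_of_norm_hasDerivWithin_le
        hg hlip left_mem_uIcc right_mem_uIcc
    _ = C * (b - a) ^ 2 := by rw [Real.norm_eq_abs, mul_assoc, ← sq, sq_abs]

theorem differentiable_dslope {f : ℝ → ℝ} (hf : ContDiff ℝ 2 f) (a : ℝ) :
    Differentiable ℝ (dslope f a) := by
  intro b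
  rcases eq_or_ne b a with rfl | hba
  · exact (hasDerivAt_dslope_same (hf.differentiable two_ne_zero)
      (hf.differentiable_deriv_two b).hasDerivAt).differentiableAt
  · exact (differentiableAt_dslope_of_ne hba).2 (hf.differentiable two_ne_zero b)

theorem abs_deriv_dslope_le {f : ℝ → ℝ} {s : Set ℝ} {C : ℝ} (hf : ContDiff ℝ 2 f)
    (hs : Convex ℝ s) (hC : ∀ z ∈ s, |deriv (deriv f) z| ≤ C) {a b : ℝ} (ha : a ∈ s)
    (hb : b ∈ s) : |deriv (dslope f a) b| ≤ C := by
  have hf₁ := hf.differentiable two_ne_zero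
  rcases eq_or_ne b a with rfl | hba
  · rw [(hasDerivAt_dslope_same hf₁ (hf.differentiable_deriv_two b).hasDerivAt).deriv,
      abs_div, abs_two]
    linarith [hC b hb, abs_nonneg (deriv (deriv f) b)]
  · have hba' : b - a ≠ 0 := sub_ne_zero.2 hba
    have key : (b - a) ^ 2 * deriv (dslope f a) b = -(f b - f a - deriv f b * (b - a)) := by
      rw [sq, mul_assoc, sub_mul_deriv_dslope (hf₁ b) (differentiable_dslope hf a b),
        dslope_of_ne f hba, slope_def_field]
      field_simp
      ring
    have hbound := abs_sub_sub_deriv_mul_le hs (fun z _ => hf₁ z)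
      (fun z _ => hf.differentiable_deriv_two z) hC ha hb
    rw [← abs_neg, ← key, abs_mul, abs_of_pos (by positivity), mul_comm C] at hbound
    exact le_of_mul_le_mul_left hbound (by positivity)

theorem deriv_dslope_add_deriv_dslope {f : ℝ → ℝ} (hf : ContDiff ℝ 2 f) {a b : ℝ} (hba : b ≠ a) :
    deriv (dslope f a) b + deriv (dslope f b) a = slope (deriv f) a b := by
  have hf₁ := hf.differentiable two_ne_zero
  have h₁ := sub_mul_deriv_dslope (hf₁ b) (differentiable_dslope hf a b)
  have h₂ := sub_mul_deriv_dslope (hf₁ a) (differentiable_dslope hf b a)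
  rw [dslope_comm f b a] at h₂
  rw [slope_def_field, eq_div_iff (sub_ne_zero.2 hba)]
  linarith

noncomputable def arcsineDensity (y : ℝ) : ℝ := 1 / (π * √(4 - y ^ 2))

theorem arcsineDensity_nonneg (y : ℝ) : 0 ≤ arcsineDensity y := by
  unfold arcsineDensity; positivity

theorem measurable_arcsineDensity : Measurable arcsineDensity := by
  unfold arcsineDensity; fun_prop

theorem hasDerivAt_sqrt_four_sub_sq {y : ℝ} (hy : y ∈ Ioo (-2 : ℝ) 2) :
    HasDerivAt (fun z => √(4 - z ^ 2)) (-y / √(4 - y ^ 2)) y := by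
  have h : 4 - y ^ 2 ≠ 0 := by nlinarith [hy.1, hy.2]
  convert ((hasDerivAt_pow 2 y).const_sub 4).sqrt h using 1
  ring

theorem intervalIntegrable_arcsineDensity :
    IntervalIntegrable arcsineDensity volume (-2) 2 := by
  refine (intervalIntegrable_iff_integrableOn_Ioc_of_le (by norm_num)).2 <|
    intervalIntegral.integrableOn_deriv_of_nonneg (g := fun z => arcsin (z / 2) / π) (by fun_prop)
      (fun y hy => ?_) (fun y _ => arcsineDensity_nonneg y)
  have h₁ : y / 2 ≠ -1 := by linarith [hy.1]
  have h₂ : y / 2 ≠ 1 := by linarith [hy.2]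
  have hs : √(4 - y ^ 2) = 2 * √(1 - (y / 2) ^ 2) := by
    rw [show 4 - y ^ 2 = 2 ^ 2 * (1 - (y / 2) ^ 2) by ring, sqrt_mul (by norm_num),
      sqrt_sq (by norm_num)]
  refine (((hasDerivAt_arcsin h₁ h₂).comp y ((hasDerivAt_id' y).div_const 2)).div_const π
    ).congr_deriv ?_
  rw [arcsineDensity, hs]
  field_simp

theorem arcsineLaw_eq_withDensity : arcsineLaw =
    (volume.restrict (Icc (-2 : ℝ) 2)).withDensity fun y => ENNReal.ofReal (arcsineDensity y) :=
  rfl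

instance : IsFiniteMeasure arcsineLaw :=
  isFiniteMeasure_withDensity_ofReal
    ((intervalIntegrable_iff_integrableOn_Icc_of_le (by norm_num)).1
      intervalIntegrable_arcsineDensity).hasFiniteIntegral

instance : NullSingletonClass arcsineLaw := by
  rw [arcsineLaw_eq_withDensity]; infer_instance

theorem ae_mem_Icc_arcsineLaw : ∀ᵐ y ∂arcsineLaw, y ∈ Icc (-2 : ℝ) 2 :=
  (withDensity_absolutelyContinuous _ _).ae_le (ae_restrict_mem measurableSet_Icc)

theorem integral_arcsineLaw_s17 (g : ℝ → ℝ) :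
    ∫ y, g y ∂arcsineLaw = ∫ y in (-2)..2, arcsineDensity y * g y := by
  rw [arcsineLaw_eq_withDensity, integral_withDensity_eq_integral_toReal_smul
    measurable_arcsineDensity.ennreal_ofReal (ae_of_all _ fun _ => ENNReal.ofReal_lt_top),
    intervalIntegral.integral_of_le (by norm_num), integral_Icc_eq_integral_Ioc]
  simp only [ENNReal.toReal_ofReal (arcsineDensity_nonneg _), smul_eq_mul]

theorem integrable_arcsineLaw_iff (g : ℝ → ℝ) :
    Integrable g arcsineLaw ↔
      IntervalIntegrable (fun y => arcsineDensity y * g y) volume (-2) 2 := by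
  rw [arcsineLaw_eq_withDensity, integrable_withDensity_iff_integrable_smul'
    measurable_arcsineDensity.ennreal_ofReal (ae_of_all _ fun _ => ENNReal.ofReal_lt_top),
    intervalIntegrable_iff_integrableOn_Icc_of_le (by norm_num)]
  simp only [ENNReal.toReal_ofReal (arcsineDensity_nonneg _), smul_eq_mul, IntegrableOn]

theorem integral_arcsineLaw_stein {g g' : ℝ → ℝ} (hg : ContinuousOn g (Icc (-2) 2))
    (hg' : ∀ y ∈ Ioo (-2 : ℝ) 2, HasDerivAt g (g' y) y)
    (hint : Integrable (fun y => (4 - y ^ 2) * g' y - y * g y) arcsineLaw) :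
    ∫ y, (4 - y ^ 2) * g' y - y * g y ∂arcsineLaw = 0 := by
  have hderiv : ∀ y ∈ Ioo (-2 : ℝ) 2, HasDerivAt (fun z => √(4 - z ^ 2) / π * g z)
      (arcsineDensity y * ((4 - y ^ 2) * g' y - y * g y)) y := by
    intro y hy
    have hpos : 0 < √(4 - y ^ 2) := sqrt_pos.2 (by nlinarith [hy.1, hy.2])
    refine (((hasDerivAt_sqrt_four_sub_sq hy).div_const π).mul (hg' y hy)).congr_deriv ?_
    have hsq : √(4 - y ^ 2) ^ 2 = 4 - y ^ 2 := sq_sqrt (by nlinarith [hy.1, hy.2])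
    rw [arcsineDensity]
    field_simp
    rw [hsq]
    ring
  rw [integral_arcsineLaw_s17, intervalIntegral.integral_eq_sub_of_hasDerivAt_of_le (by norm_num)
    (by fun_prop) hderiv ((integrable_arcsineLaw_iff _).1 hint)]
  norm_num

theorem Continuous.integrable_of_ae_mem {α E : Type*} [TopologicalSpace α] [MeasurableSpace α]
    [OpensMeasurableSpace α] [SecondCountableTopology α] [NormedAddCommGroup E] {μ : Measure α}
    [IsFiniteMeasure μ] {K : Set α} (hK : IsCompact K) (hμ : ∀ᵐ y ∂μ, y ∈ K) {g : α → E}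
    (hg : Continuous g) :
    Integrable g μ :=
  let ⟨C, hC⟩ := hK.exists_bound_of_continuousOn hg.continuousOn
  Integrable.of_bound hg.aestronglyMeasurable C (hμ.mono hC)

theorem hasDerivAt_integral_dslope {f : ℝ → ℝ} (hf : ContDiff ℝ 2 f) {μ : Measure ℝ}
    [IsFiniteMeasure μ] [NullSingletonClass μ] {a b : ℝ} (hμ : ∀ᵐ y ∂μ, y ∈ Icc a b) (x : ℝ) :
    Integrable (fun y => deriv (dslope f y) x) μ ∧
      HasDerivAt (fun t => ∫ y, dslope f y t ∂μ) (∫ y, deriv (dslope f y) x ∂μ) x := by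
  set K := Icc (min a (x - 1)) (max b (x + 1))
  have hK : Icc a b ⊆ K := Icc_subset_Icc (min_le_left _ _) (le_max_left _ _)
  have hball : Metric.ball x 1 ⊆ K := by
    rw [Real.ball_eq_Ioo]
    exact Ioo_subset_Icc_self.trans (Icc_subset_Icc (min_le_right _ _) (le_max_right _ _))
  obtain ⟨C, hC⟩ := isCompact_Icc.exists_bound_of_continuousOn (s := K)
    (hf.deriv' (n := 1)).continuous_deriv_one.continuousOn
  have hcont : ∀ t, Continuous fun y => dslope f y t := fun t => by
    simpa only [dslope_comm f _ t] using (differentiable_dslope hf t).continuous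
  have hslope : Measurable fun y => slope (deriv f) y x := by
    simp only [slope_def_field]
    exact (measurable_const.sub (measurable_deriv f)).div (measurable_const.sub measurable_id)
  have hmeas : AEStronglyMeasurable (fun y => deriv (dslope f y) x) μ := by
    refine (hslope.sub (measurable_deriv (dslope f x))).aestronglyMeasurable.congr ?_
    filter_upwards [μ.ae_ne x] with y hy
    exact (eq_sub_of_add_eq (deriv_dslope_add_deriv_dslope hf hy.symm)).symm
  exact hasDerivAt_integral_of_dominated_loc_of_deriv_le (Metric.ball_mem_nhds x one_pos)
    (Eventually.of_forall fun t => (hcont t).aestronglyMeasurable)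
    ((hcont x).integrable_of_ae_mem isCompact_Icc hμ) hmeas
    (hμ.mono fun y hy t ht => abs_deriv_dslope_le hf (convex_Icc _ _) hC
      (hK hy) (hball ht))
    (integrable_const C)
    (Eventually.of_forall fun y t _ => (differentiable_dslope hf y t).hasDerivAt)

theorem integrable_deriv_dslope {f : ℝ → ℝ} (hf : ContDiff ℝ 2 f) {μ : Measure ℝ}
    [IsFiniteMeasure μ] {a b : ℝ} (hμ : ∀ᵐ y ∂μ, y ∈ Icc a b) (x : ℝ) :
    Integrable (deriv (dslope f x)) μ := by
  obtain ⟨C, hC⟩ := isCompact_Icc.exists_bound_of_continuousOn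
    (s := Icc (min a x) (max b x)) (hf.deriv' (n := 1)).continuous_deriv_one.continuousOn
  refine Integrable.of_bound (measurable_deriv _).aestronglyMeasurable C (hμ.mono fun y hy => ?_)
  exact abs_deriv_dslope_le hf (convex_Icc _ _) hC ⟨min_le_right _ _, le_max_right _ _⟩
    (Icc_subset_Icc (min_le_left _ _) (le_max_left _ _) hy)

theorem calU_eq_integral_dslope (f : ℝ → ℝ) (t : ℝ) :
    calU f t = ∫ y, dslope f y t ∂arcsineLaw := by
  refine integral_congr_ae ?_
  filter_upwards [arcsineLaw.ae_ne t] with y hy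
  rw [dslope_of_ne f hy.symm, slope_def_field]

theorem integral_arcsineLaw_stein_dslope {f : ℝ → ℝ} (hf : ContDiff ℝ 2 f) (x : ℝ) :
    ∫ y, y * deriv f y ∂arcsineLaw + x * ∫ y, deriv f y ∂arcsineLaw =
      x * ∫ y, dslope f x y ∂arcsineLaw + (4 - x ^ 2) * ∫ y, deriv (dslope f x) y ∂arcsineLaw := by
  have hF : Integrable (dslope f x) arcsineLaw :=
    (differentiable_dslope hf x).continuous.integrable_of_ae_mem isCompact_Icc
      ae_mem_Icc_arcsineLaw
  have hB := integrable_deriv_dslope hf ae_mem_Icc_arcsineLaw x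
  have hf' : Continuous (deriv f) := hf.continuous_deriv one_le_two
  have hD := hf'.integrable_of_ae_mem isCompact_Icc ae_mem_Icc_arcsineLaw
  have hyD : Integrable (fun y => y * deriv f y) arcsineLaw :=
    (continuous_id.mul hf').integrable_of_ae_mem isCompact_Icc ae_mem_Icc_arcsineLaw
  have hP : Integrable (fun y => x * dslope f x y + (4 - x ^ 2) * deriv (dslope f x) y)
      arcsineLaw := (hF.const_mul x).add (hB.const_mul _)
  have hQ : Integrable (fun y => x * deriv f y + y * deriv f y) arcsineLaw :=
    (hD.const_mul x).add hyD
  have hsplit : (fun y => (4 - y ^ 2) * deriv (dslope f x) y - y * dslope f x y) =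
      fun y => (x * dslope f x y + (4 - x ^ 2) * deriv (dslope f x) y) -
        (x * deriv f y + y * deriv f y) := by
    funext y
    linear_combination (-(x + y)) * sub_mul_deriv_dslope
      (hf.differentiable two_ne_zero y) (differentiable_dslope hf x y)
  have hint : Integrable (fun y => (4 - y ^ 2) * deriv (dslope f x) y - y * dslope f x y)
      arcsineLaw := by
    rw [hsplit]
    exact hP.sub hQ
  have hstein := integral_arcsineLaw_stein (differentiable_dslope hf x).continuous.continuousOn
    (fun y _ => (differentiable_dslope hf x y).hasDerivAt) hint
  rw [hsplit, integral_sub hP hQ,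
    integral_add (hF.const_mul x) (hB.const_mul _), integral_add (hD.const_mul x) hyD,
    integral_const_mul, integral_const_mul, integral_const_mul] at hstein
  linarith

/-- For a `C²` function `f` and `x ∈ (-2,2)`,
`(𝒩f)(x) = -√(4-x²) · d/dx [√(4-x²) (𝒰f)(x)]`. -/
theorem calN_eq_deriv_calU (f : ℝ → ℝ) (hf : ContDiff ℝ 2 f) (x : ℝ)
    (hx : x ∈ Set.Ioo (-2 : ℝ) 2) :
    calN f x =
      -Real.sqrt (4 - x ^ 2) *
        deriv (fun t => Real.sqrt (4 - t ^ 2) * calU f t) x := by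
  obtain ⟨hA, hU⟩ := hasDerivAt_integral_dslope hf ae_mem_Icc_arcsineLaw x
  have hB := integrable_deriv_dslope hf ae_mem_Icc_arcsineLaw x
  have hslope : ∫ y, (deriv f x - deriv f y) / (x - y) ∂arcsineLaw =
      ∫ y, deriv (dslope f y) x ∂arcsineLaw + ∫ y, deriv (dslope f x) y ∂arcsineLaw := by
    rw [← integral_add hA hB]
    refine integral_congr_ae ?_
    filter_upwards [arcsineLaw.ae_ne x] with y hy
    rw [deriv_dslope_add_deriv_dslope hf hy.symm, slope_def_field]
  have hcomm : ∫ y, dslope f y x ∂arcsineLaw = ∫ y, dslope f x y ∂arcsineLaw := by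
    simp only [dslope_comm f _ x]
  have hsq : √(4 - x ^ 2) ^ 2 = 4 - x ^ 2 := sq_sqrt (by nlinarith [hx.1, hx.2])
  have hpos : 0 < √(4 - x ^ 2) := sqrt_pos.2 (by nlinarith [hx.1, hx.2])
  simp only [calU_eq_integral_dslope]
  rw [((hasDerivAt_sqrt_four_sub_sq hx).fun_mul hU).deriv, calN, hslope, hcomm]
  field_simp
  linear_combination integral_arcsineLaw_stein_dslope hf x +
    (∫ y, deriv (dslope f y) x ∂arcsineLaw) * hsq
end
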